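/- arXiv:1912.03919 — 5 statements merged into one kernel-verified Lean document; each statement's English description precedes it below -/
import Mathlib

section
/- Let k ≥ 2 be an integer, let G be a finite connected simple graph, and let K̄_{k+1} denote the edgeless graph on k+1 vertices. Then γ_{[1,k]}(G ∘ K̄_{k+1}) = (k+1)·|V(G)| (i.e., the only [1,k]-dominating set of G ∘ K̄_{k+1} is its entire vertex set) if and only if G has no total [1,k]-dominating set. -/
/-- `D` is a `[1,k]`-dominating set of `G`: every vertex outside `D` is adjacent to
at least one and at most `k` vertices of `D`. -/
def IsOneKDom {V : Type*} (G : SimpleGraph V) (k : ℕ) (D : Set V) : Prop :=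
  ∀ v ∉ D, 1 ≤ {u ∈ D | G.Adj v u}.ncard ∧ {u ∈ D | G.Adj v u}.ncard ≤ k

/-- `D` is a total `[1,k]`-dominating set of `G`: every vertex is adjacent to
at least one and at most `k` vertices of `D`. -/
def IsTotalOneKDom {V : Type*} (G : SimpleGraph V) (k : ℕ) (D : Set V) : Prop :=
  ∀ v : V, 1 ≤ {u ∈ D | G.Adj v u}.ncard ∧ {u ∈ D | G.Adj v u}.ncard ≤ k

/-- The `[1,k]`-domination number: minimum cardinality of a `[1,k]`-dominating set. -/
noncomputable def oneKDomNum {V : Type*} [Fintype V] (G : SimpleGraph V) (k : ℕ) : ℕ :=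
  sInf {m | ∃ D : Set V, IsOneKDom G k D ∧ D.ncard = m}

/-- The total `[1,k]`-domination number: minimum cardinality of a total
`[1,k]`-dominating set. -/
noncomputable def totalOneKDomNum {V : Type*} [Fintype V] (G : SimpleGraph V) (k : ℕ) : ℕ :=
  sInf {m | ∃ D : Set V, IsTotalOneKDom G k D ∧ D.ncard = m}

/-- The lexicographic product `G ∘ H`. -/
def lexProd {α β : Type*} (G : SimpleGraph α) (H : SimpleGraph β) :
    SimpleGraph (α × β) where
  Adj a b := G.Adj a.1 b.1 ∨ (a.1 = b.1 ∧ H.Adj a.2 b.2)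
  symm := by
    constructor
    rintro ⟨g, h⟩ ⟨g', h'⟩ (hadj | ⟨rfl, hadj⟩)
    · exact Or.inl hadj.symm
    · exact Or.inr ⟨rfl, hadj.symm⟩
  loopless := by
    constructor
    rintro ⟨g, h⟩ (hadj | ⟨-, hadj⟩)
    · exact G.irrefl hadj
    · exact H.irrefl hadj

theorem SimpleGraph.Preconnected.forall_of_adj {V : Type*} {G : SimpleGraph V}
    (hG : G.Preconnected) {p : V → Prop} (hp : ∀ u v, G.Adj u v → p u → p v)
    {u : V} (hu : p u) (v : V) : p v := by
  obtain ⟨w⟩ := hG u v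
  induction w with
  | nil => exact hu
  | cons h _ ih => exact ih (hp _ _ h hu)

theorem oneKDomNum_eq_card {V : Type*} [Fintype V] {G : SimpleGraph V} {k : ℕ}
    (h : ∀ D, IsOneKDom G k D → D = Set.univ) : oneKDomNum G k = Fintype.card V := by
  have hset : {m | ∃ D : Set V, IsOneKDom G k D ∧ D.ncard = m} = {Fintype.card V} := by
    ext m
    constructor
    · rintro ⟨D, hD, rfl⟩
      simp [h D hD]
    · rintro rfl
      exact ⟨Set.univ, fun v hv => absurd (Set.mem_univ v) hv, by simp⟩
  rw [oneKDomNum, hset, csInf_singleton]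

section LexProdBot

variable {α β : Type*} {G : SimpleGraph α} {k : ℕ}

theorem lexProd_bot_neighbors (D : Set (α × β)) (v : α) (i : β) :
    {u ∈ D | (lexProd G (⊥ : SimpleGraph β)).Adj (v, i) u} = {p ∈ D | G.Adj v p.1} := by
  ext
  simp [lexProd]

theorem IsTotalOneKDom.isOneKDom_lexProd_bot {T : Set α} (hT : IsTotalOneKDom G k T) (b : β) :
    IsOneKDom (lexProd G (⊥ : SimpleGraph β)) k (T ×ˢ {b}) := by
  rintro ⟨v, i⟩ -
  have himage : {p ∈ T ×ˢ {b} | G.Adj v p.1} = (·, b) '' {u ∈ T | G.Adj v u} := by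
    ext ⟨u, j⟩
    simp only [Set.mem_ofPred_eq, Set.mem_prod, Set.mem_singleton_iff, Set.mem_image,
      Prod.mk.injEq]
    constructor
    · rintro ⟨⟨hu, rfl⟩, hadj⟩
      exact ⟨u, ⟨hu, hadj⟩, rfl, rfl⟩
    · rintro ⟨u, ⟨hu, hadj⟩, rfl, rfl⟩
      exact ⟨⟨hu, rfl⟩, hadj⟩
  rw [lexProd_bot_neighbors, himage,
    Set.ncard_image_of_injective _ fun _ _ h => (Prod.mk.inj h).1]
  exact hT v

/-- A vertex `(u, j) ∉ D` next to a full column would see more than `k` vertices of `D`. -/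
theorem IsOneKDom.lexProd_bot_column_of_adj {D : Set (α × β)}
    (hD : IsOneKDom (lexProd G (⊥ : SimpleGraph β)) k D) (hk : k < Nat.card β) {v u : α}
    (hadj : G.Adj v u) (hv : ∀ i, (v, i) ∈ D) (j : β) : (u, j) ∈ D := by
  by_contra hj
  obtain ⟨hpos, hle⟩ := hD (u, j) hj
  rw [lexProd_bot_neighbors] at hpos hle
  have hcolumn : Prod.mk v '' Set.univ ⊆ {p ∈ D | G.Adj u p.1} := by
    rintro _ ⟨i, -, rfl⟩
    exact ⟨hv i, hadj.symm⟩
  have := Set.ncard_le_ncard hcolumn (Set.finite_of_ncard_pos hpos)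
  rw [Set.ncard_image_of_injective _ (Prod.mk_right_injective v), Set.ncard_univ] at this
  omega

theorem IsOneKDom.isTotalOneKDom_image_fst {D : Set (α × β)}
    (hD : IsOneKDom (lexProd G (⊥ : SimpleGraph β)) k D) (hcol : ∀ v, ∃ i, (v, i) ∉ D) :
    IsTotalOneKDom G k (Prod.fst '' D) := by
  intro v
  obtain ⟨i, hi⟩ := hcol v
  obtain ⟨hpos, hle⟩ := hD (v, i) hi
  rw [lexProd_bot_neighbors] at hpos hle
  have hfin := Set.finite_of_ncard_pos hpos
  have himage : {u ∈ Prod.fst '' D | G.Adj v u} = Prod.fst '' {p ∈ D | G.Adj v p.1} := by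
    ext u
    simp only [Set.mem_ofPred_eq, Set.mem_image]
    constructor
    · rintro ⟨⟨p, hp, rfl⟩, hadj⟩
      exact ⟨p, ⟨hp, hadj⟩, rfl⟩
    · rintro ⟨p, ⟨hp, hadj⟩, rfl⟩
      exact ⟨⟨p, hp, rfl⟩, hadj⟩
  rw [himage]
  refine ⟨?_, (Set.ncard_image_le hfin).trans hle⟩
  exact (Set.ncard_pos (hfin.image _)).mpr (((Set.ncard_pos hfin).mp hpos).image _)

/-- If `G` has no total `[1,k]`-dominating set, some column of `D` is full, and fullness
spreads along the edges of `G`. -/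
theorem IsOneKDom.eq_univ_of_lexProd_bot {D : Set (α × β)}
    (hD : IsOneKDom (lexProd G (⊥ : SimpleGraph β)) k D) (hG : G.Preconnected)
    (hk : k < Nat.card β) (hno : ¬ ∃ T : Set α, IsTotalOneKDom G k T) : D = Set.univ := by
  obtain ⟨v, hv⟩ : ∃ v, ∀ i, (v, i) ∈ D := by
    by_contra hcol
    push Not at hcol
    exact hno ⟨_, hD.isTotalOneKDom_image_fst hcol⟩
  refine Set.eq_univ_of_forall fun ⟨u, j⟩ => ?_
  exact hG.forall_of_adj (p := fun w => ∀ i, (w, i) ∈ D)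
    (fun _ _ hadj hw => hD.lexProd_bot_column_of_adj hk hadj hw) hv u j

end LexProdBot

theorem lexProd_bot_oneKDomNum_eq_iff_general
    {α : Type*} [Fintype α] (k : ℕ)
    (G : SimpleGraph α) (hGconn : G.Connected) :
    (oneKDomNum (lexProd G (⊥ : SimpleGraph (Fin (k + 1)))) k = (k + 1) * Fintype.card α ∧
      (∀ D : Set (α × Fin (k + 1)),
        IsOneKDom (lexProd G (⊥ : SimpleGraph (Fin (k + 1)))) k D → D = Set.univ)) ↔
      ¬ ∃ D : Set α, IsTotalOneKDom G k D := by
  constructor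
  · rintro ⟨-, huniv⟩ ⟨T, hT⟩
    obtain ⟨v⟩ := hGconn.nonempty
    -- `T × {0}` is `[1,k]`-dominating, so it is everything: this forces `k = 0`,
    -- and no set is total `[1,0]`-dominating.
    have hlast : (v, Fin.last k) ∈ T ×ˢ {0} := by
      rw [huniv _ (hT.isOneKDom_lexProd_bot 0)]
      trivial
    have hk : k = 0 := Fin.last_eq_zero_iff.mp hlast.2
    have := hT v
    omega
  · intro hno
    have huniv : ∀ D, IsOneKDom (lexProd G (⊥ : SimpleGraph (Fin (k + 1)))) k D → D = .univ :=
      fun _ hD => hD.eq_univ_of_lexProd_bot hGconn.preconnected (by simp) hno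
    refine ⟨?_, huniv⟩
    rw [oneKDomNum_eq_card huniv, Fintype.card_prod, Fintype.card_fin, mul_comm]

/-- Corollary: for a finite connected graph `G` and `k ≥ 2`,
`γ_[1,k](G ∘ K̄_(k+1)) = (k+1)⬝|V(G)|` (equivalently, the only `[1,k]`-dominating set
of `G ∘ K̄_(k+1)` is its whole vertex set) if and only if `G` has no total
`[1,k]`-dominating set. -/
theorem lexProd_bot_oneKDomNum_eq_iff
    {α : Type*} [Fintype α] (k : ℕ) (hk : 2 ≤ k)
    (G : SimpleGraph α) (hGconn : G.Connected) :
    (oneKDomNum (lexProd G (⊥ : SimpleGraph (Fin (k + 1)))) k = (k + 1) * Fintype.card α ∧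
      (∀ D : Set (α × Fin (k + 1)),
        IsOneKDom (lexProd G (⊥ : SimpleGraph (Fin (k + 1)))) k D → D = Set.univ)) ↔
      ¬ ∃ D : Set α, IsTotalOneKDom G k D :=
  lexProd_bot_oneKDomNum_eq_iff_general k G hGconn
end

section
/- Let k ≥ 2, let X = {x_1,…,x_n} be a finite set, and let C = {C_1,…,C_t} be a collection of 3-element subsets of X. If the gadget graph G_{X,C} has a total [1,k]-dominating set, then there exists a subcollection C' ⊆ C such that every element of X belongs to at least one and at most k members of C'. -/
/-- Vertices of the gadget graph `G_{X,C}`: the elements `x i` of `X`, one vertex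
`c j` per set `C j`, and for each `j` the vertices `p j j'` and leaves `l j j'`. -/
inductive GadgetV (n t k : ℕ) : Type
  | x : Fin n → GadgetV n t k
  | c : Fin t → GadgetV n t k
  | p : Fin t → Fin k → GadgetV n t k
  | l : Fin t → Fin k → GadgetV n t k
  deriving DecidableEq

/-- The gadget graph `G_{X,C}`: edges `c j — p j j'`, `p j j' — l j j'`, and
`x i — c j` whenever `x i ∈ C j`. -/
def gadgetGraph (n t k : ℕ) (C : Fin t → Finset (Fin n)) :
    SimpleGraph (GadgetV n t k) :=
  SimpleGraph.fromRel (fun a b =>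
    match a, b with
    | .c j, .p j' _ => j = j'
    | .p j i, .l j' i' => j = j' ∧ i = i'
    | .x i, .c j => i ∈ C j
    | _, _ => False)

/-!
Take for `C'` the sets `C j` whose vertex `c j` lies in the dominating set `D`. The neighbours of
`x i` are exactly the vertices `c j` with `i ∈ C j`, so the number of members of `C'` containing
`i` equals the number of neighbours of `x i` in `D`, which lies between `1` and `k`.
-/

namespace GadgetV

theorem c_injective {n t k : ℕ} : Function.Injective (c : Fin t → GadgetV n t k) :=
  fun _ _ h => c.inj h

end GadgetV

variable {n t k : ℕ} {C : Fin t → Finset (Fin n)}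

theorem gadgetGraph_adj_x_iff {i : Fin n} {u : GadgetV n t k} :
    (gadgetGraph n t k C).Adj (.x i) u ↔ ∃ j, u = .c j ∧ i ∈ C j := by
  cases u <;> simp [gadgetGraph]

theorem gadgetGraph_neighbors_x_inter (D : Set (GadgetV n t k)) (i : Fin n) :
    {u ∈ D | (gadgetGraph n t k C).Adj (.x i) u} = GadgetV.c '' {j | .c j ∈ D ∧ i ∈ C j} := by
  ext u
  simp only [Set.mem_ofPred_eq, gadgetGraph_adj_x_iff, Set.mem_image]
  constructor
  · rintro ⟨hu, j, rfl, hij⟩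
    exact ⟨j, ⟨hu, hij⟩, rfl⟩
  · rintro ⟨j, ⟨hu, hij⟩, rfl⟩
    exact ⟨hu, j, rfl, hij⟩

open Classical in
theorem gadgetGraph_ncard_neighbors_x_inter (D : Set (GadgetV n t k)) (i : Fin n) :
    {u ∈ D | (gadgetGraph n t k C).Adj (.x i) u}.ncard =
      ((Finset.univ.filter fun j => .c j ∈ D).filter fun j => i ∈ C j).card := by
  rw [gadgetGraph_neighbors_x_inter, Set.ncard_image_of_injective _ GadgetV.c_injective,
    ← Set.ncard_coe_finset]
  congr 1
  ext j
  simp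

theorem gadgetGraph_totalOneKDom_to_cover_general
    {n t k : ℕ} (C : Fin t → Finset (Fin n))
    (hD : ∃ D : Set (GadgetV n t k), IsTotalOneKDom (gadgetGraph n t k C) k D) :
    ∃ C' : Finset (Fin t), ∀ i : Fin n,
      1 ≤ (C'.filter (fun j => i ∈ C j)).card ∧ (C'.filter (fun j => i ∈ C j)).card ≤ k := by
  classical
  obtain ⟨D, hD⟩ := hD
  refine ⟨Finset.univ.filter fun j => .c j ∈ D, fun i => ?_⟩
  rw [← gadgetGraph_ncard_neighbors_x_inter]
  exact hD (.x i)

/-- If the gadget graph `G_{X,C}` has a total `[1,k]`-dominating set, then there is a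
subcollection `C' ⊆ C` covering every element of `X` at least once and at most `k`
times. -/
theorem gadgetGraph_totalOneKDom_to_cover
    {n t k : ℕ} (hk : 2 ≤ k) (C : Fin t → Finset (Fin n))
    (hC3 : ∀ j, (C j).card = 3)
    (hD : ∃ D : Set (GadgetV n t k), IsTotalOneKDom (gadgetGraph n t k C) k D) :
    ∃ C' : Finset (Fin t), ∀ i : Fin n,
      1 ≤ (C'.filter (fun j => i ∈ C j)).card ∧ (C'.filter (fun j => i ∈ C j)).card ≤ k :=
  gadgetGraph_totalOneKDom_to_cover_general C hD
end

section
/- The star-like tree S(2,2,2) on 7 vertices, consisting of a central vertex with three paths of length 2 attached (i.e., the spider with three legs of length 2), has no total [1,2]-dominating set. -/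
/-- The star-like tree `S(2,…,2)` with `m` legs of length 2: the central vertex is
`none`, the support vertices are `some (i, 0)` (adjacent to the centre) and the
leaves are `some (i, 1)` (adjacent to `some (i, 0)`). -/
def spider (m : ℕ) : SimpleGraph (Option (Fin m × Fin 2)) :=
  SimpleGraph.fromRel (fun a b =>
    match a, b with
    | none, some (_, j) => j = 0
    | some (i, j), some (i', j') => i = i' ∧ j = 0 ∧ j' = 1
    | _, _ => False)

/-! A leaf's only neighbour is its support vertex, so a total dominating set contains every
support vertex; the centre is adjacent to all `m` of them, which forces `m ≤ k`. -/

lemma IsTotalOneKDom.mem_of_neighborSet_eq_singleton {V : Type*} {G : SimpleGraph V} {k : ℕ}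
    {D : Set V} (hD : IsTotalOneKDom G k D) {v u : V} (hv : G.neighborSet v = {u}) : u ∈ D := by
  obtain ⟨w, hwD, hvw⟩ := Set.nonempty_of_ncard_ne_zero (Nat.one_le_iff_ne_zero.mp (hD v).1)
  have hw : w = u := by
    simpa [hv] using (G.mem_neighborSet v w).mpr hvw
  exact hw ▸ hwD

lemma spider_neighborSet_leaf {m : ℕ} (i : Fin m) :
    (spider m).neighborSet (some (i, 1)) = {some (i, 0)} := by
  ext (_ | ⟨i', j'⟩)
  · simp [spider]
  · fin_cases j' <;> simp [spider, eq_comm]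

lemma spider_adj_center_support {m : ℕ} (i : Fin m) : (spider m).Adj none (some (i, 0)) := by
  simp [spider]

theorem IsTotalOneKDom.le_of_spider {m k : ℕ} {D : Set (Option (Fin m × Fin 2))}
    (hD : IsTotalOneKDom (spider m) k D) : m ≤ k := by
  have hsupports : Set.range (fun i : Fin m => some (i, 0)) ⊆ {u ∈ D | (spider m).Adj none u} := by
    rintro _ ⟨i, rfl⟩
    exact ⟨hD.mem_of_neighborSet_eq_singleton (spider_neighborSet_leaf i),
      spider_adj_center_support i⟩
  calc m = (Set.range (fun i : Fin m => some (i, 0))).ncard := by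
        rw [Set.ncard_range_of_injective (fun i j h => by simpa using h), Nat.card_fin]
    _ ≤ {u ∈ D | (spider m).Adj none u}.ncard := Set.ncard_le_ncard hsupports
    _ ≤ k := (hD none).2

/-- The star-like tree `S(2,2,2)` on 7 vertices has no total `[1,2]`-dominating
set. -/
theorem spider_three_no_totalOneKDom :
    ¬ ∃ D : Set (Option (Fin 3 × Fin 2)), IsTotalOneKDom (spider 3) 2 D :=
  fun ⟨_, hD⟩ => absurd hD.le_of_spider (by norm_num)
end

section
/- Let k ≥ 1, let G be a finite simple graph, let K̄_{k+1} be the edgeless graph on k+1 vertices, and let D be a [1,k]-dominating set of the lexicographic product G ∘ K̄_{k+1}. If D contains the entire H-layer H^g = {(g,h) : h ∈ V(K̄_{k+1})} over some vertex g of G, then for every neighbor g' of g in G, D also contains the entire H-layer H^{g'}. -/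
/- If `(g', h) ∉ D`, it is adjacent to all `k + 1` vertices of the layer over the neighbour `g`,
all of which lie in `D`; this exceeds the bound `k` of a `[1,k]`-dominating set. -/

theorem IsOneKDom.mem_of_lt_ncard {V : Type*} {G : SimpleGraph V} {k : ℕ} {D S : Set V}
    (hD : IsOneKDom G k D) {v : V} (hSD : S ⊆ D) (hS : ∀ u ∈ S, G.Adj v u)
    (hk : k < S.ncard) : v ∈ D := by
  by_contra hv
  obtain ⟨hpos, hle⟩ := hD v hv
  have hfin : {u ∈ D | G.Adj v u}.Finite := Set.finite_of_ncard_pos hpos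
  have hSN : S ⊆ {u ∈ D | G.Adj v u} := fun u hu => ⟨hSD hu, hS u hu⟩
  have := Set.ncard_le_ncard hSN hfin
  omega

theorem lexProd_mem_of_layer_subset_of_adj {α β : Type*} {G : SimpleGraph α}
    (H : SimpleGraph β) {k : ℕ} (hβ : k < Nat.card β) {D : Set (α × β)}
    (hD : IsOneKDom (lexProd G H) k D) {g g' : α} (hadj : G.Adj g g')
    (hg : ∀ h, (g, h) ∈ D) (h : β) : (g', h) ∈ D := by
  refine hD.mem_of_lt_ncard (S := Set.range (Prod.mk g)) ?_ ?_ ?_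
  · rintro _ ⟨h', rfl⟩
    exact hg h'
  · rintro _ ⟨h', rfl⟩
    exact Or.inl hadj.symm
  · rwa [Set.ncard_range_of_injective (Prod.mk_right_injective g)]

theorem layer_subset_of_adj_general
    {α : Type*} (k : ℕ) (G : SimpleGraph α)
    (D : Set (α × Fin (k + 1)))
    (hD : IsOneKDom (lexProd G (⊥ : SimpleGraph (Fin (k + 1)))) k D)
    (g : α) (hg : ∀ h : Fin (k + 1), (g, h) ∈ D)
    (g' : α) (hadj : G.Adj g g') :
    ∀ h : Fin (k + 1), (g', h) ∈ D :=
  lexProd_mem_of_layer_subset_of_adj ⊥ (by simp) hD hadj hg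

/-- If a `[1,k]`-dominating set `D` of `G ∘ K̄_(k+1)` contains the whole layer over a
vertex `g`, then it contains the whole layer over every neighbour of `g`. -/
theorem layer_subset_of_adj
    {α : Type*} [Fintype α] (k : ℕ) (hk : 1 ≤ k) (G : SimpleGraph α)
    (D : Set (α × Fin (k + 1)))
    (hD : IsOneKDom (lexProd G (⊥ : SimpleGraph (Fin (k + 1)))) k D)
    (g : α) (hg : ∀ h : Fin (k + 1), (g, h) ∈ D)
    (g' : α) (hadj : G.Adj g g') :
    ∀ h : Fin (k + 1), (g', h) ∈ D :=
  layer_subset_of_adj_general k G D hD g hg g' hadj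
end

section
/- Let k ≥ 1, let G be a finite simple graph, let K̄_{k+1} be the edgeless graph on k+1 vertices, and suppose g₁ is a vertex of degree 1 in G with unique neighbor g₂. Then every [1,k]-dominating set D of the lexicographic product G ∘ K̄_{k+1} intersects the H-layer H^{g₂}, i.e., D ∩ {(g₂,h) : h ∈ V(K̄_{k+1})} ≠ ∅. -/
/-! A vertex of `D^c` in the layer over `g₁` has all its neighbours in the layer over `g₂`, so if
`D` misses that layer the whole layer over `g₁` lies in `D`. But then a vertex over `g₂` outside
`D` has all `k + 1` vertices over `g₁` as neighbours in `D`, one more than a `[1,k]`-dominating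
set allows. -/

section

variable {α β : Type*} {G : SimpleGraph α}

@[simp]
lemma lexProd_bot_adj {a b : α × β} : (lexProd G ⊥).Adj a b ↔ G.Adj a.1 b.1 := by
  simp [lexProd]

lemma IsOneKDom.exists_adj_mem {V : Type*} {H : SimpleGraph V} {k : ℕ} {D : Set V}
    (hD : IsOneKDom H k D) {v : V} (hv : v ∉ D) : ∃ u ∈ D, H.Adj v u :=
  Set.nonempty_of_ncard_ne_zero (Nat.one_le_iff_ne_zero.mp (hD v hv).1)

lemma IsOneKDom.mem_layer_of_pendant {k : ℕ} {D : Set (α × β)}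
    (hD : IsOneKDom (lexProd G ⊥) k D) {g₁ g₂ : α} (huniq : ∀ w, G.Adj g₁ w → w = g₂)
    (hmiss : ∀ h, (g₂, h) ∉ D) (h : β) : (g₁, h) ∈ D := by
  by_contra hh
  obtain ⟨⟨g, h'⟩, huD, hadj⟩ := hD.exists_adj_mem hh
  obtain rfl : g = g₂ := huniq g (lexProd_bot_adj.mp hadj)
  exact hmiss h' huD

lemma IsOneKDom.card_le_of_forall_mem_layer [Finite α] [Fintype β] {k : ℕ} {D : Set (α × β)}
    (hD : IsOneKDom (lexProd G ⊥) k D) {g₁ g₂ : α} (hadj : G.Adj g₂ g₁)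
    (hlayer : ∀ h, (g₁, h) ∈ D) {h₀ : β} (hh₀ : (g₂, h₀) ∉ D) : Fintype.card β ≤ k := by
  have hsub : Set.range (Prod.mk g₁ : β → α × β) ⊆ {u ∈ D | (lexProd G ⊥).Adj (g₂, h₀) u} := by
    rintro _ ⟨h, rfl⟩
    exact ⟨hlayer h, lexProd_bot_adj.mpr hadj⟩
  calc Fintype.card β
      = (Set.range (Prod.mk g₁ : β → α × β)).ncard := by
        rw [Set.ncard_range_of_injective (Prod.mk_right_injective g₁), Nat.card_eq_fintype_card]
    _ ≤ {u ∈ D | (lexProd G ⊥).Adj (g₂, h₀) u}.ncard := Set.ncard_le_ncard hsub (Set.toFinite _)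
    _ ≤ k := (hD _ hh₀).2

end

theorem layer_meets_of_pendant_general
    {α : Type*} [Fintype α] (k : ℕ) (G : SimpleGraph α)
    (D : Set (α × Fin (k + 1)))
    (hD : IsOneKDom (lexProd G (⊥ : SimpleGraph (Fin (k + 1)))) k D)
    (g₁ g₂ : α) (hadj : G.Adj g₁ g₂) (huniq : ∀ w : α, G.Adj g₁ w → w = g₂) :
    ∃ h : Fin (k + 1), (g₂, h) ∈ D := by
  by_contra! hmiss
  have hlayer := hD.mem_layer_of_pendant huniq hmiss
  have := hD.card_le_of_forall_mem_layer hadj.symm hlayer (hmiss 0)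
  rw [Fintype.card_fin] at this
  omega

/-- If `g₁` is a vertex of degree 1 in `G` with unique neighbour `g₂`, then every
`[1,k]`-dominating set of `G ∘ K̄_(k+1)` meets the layer over `g₂`. -/
theorem layer_meets_of_pendant
    {α : Type*} [Fintype α] (k : ℕ) (hk : 1 ≤ k) (G : SimpleGraph α)
    (D : Set (α × Fin (k + 1)))
    (hD : IsOneKDom (lexProd G (⊥ : SimpleGraph (Fin (k + 1)))) k D)
    (g₁ g₂ : α) (hadj : G.Adj g₁ g₂) (huniq : ∀ w : α, G.Adj g₁ w → w = g₂) :
    ∃ h : Fin (k + 1), (g₂, h) ∈ D :=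
  layer_meets_of_pendant_general k G D hD g₁ g₂ hadj huniq
end
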